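/- arXiv:1809.00389 — 2 statements merged into one kernel-verified Lean document; each statement's English description precedes it below -/
import Mathlib

section
/- Let n = ν, let Θ₁, Θ₂ ∈ 𝔸ₙ be invertible, 𝒜 = [[2Θ₁K, 2Θ₁L],[2Θ₂Lᵀ, 2Θ₂M]] with K, M ∈ 𝕊ₙ and L ∈ ℝ^{n×n}, and let P, Q satisfy [𝒜, P] = (1/τ)(P − ΣΘ^{-1}) and [𝒜, Q] = Θ𝒞ᵀ𝒞 − (1/τ)Q, where Θ = diag(Θ₁, Θ₂). Let D := [Q, P], and suppose the optimality conditions D₁₂ = (λ/2)ΠLP₂₂ and D₂₂ = 0 hold, with Π ≻ 0, λ > 0. Under the nondegeneracy conditions that P₂₂ is invertible and det D₁₂ ≠ 0, the coupling and energy matrices of the observer are given by L = (2/λ)Π^{-1}D₁₂P₂₂^{-1} and M = Θ₂^{-1}D₁₂^{-1}(Θ₁KD₁₂ − D₁₁Θ₁L − (1/2)((1/τ)[ΣΘ^{-1}, Q]₁₂ + [Θ𝒞ᵀ𝒞, P]₁₂)). -/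
/-!
Applying the derivation `[𝒜, ·]` to `D = [Q, P]` and substituting the two Lyapunov equations
gives `[𝒜, D] = (1/τ)[ΣΘ⁻¹, Q] + [Θ𝒞ᵀ𝒞, P]`. Since `D₂₂ = 0`, the `(1,2)` block of this identity
is affine in `M` with invertible coefficient `D₁₂Θ₂`, and the first optimality condition is
linear in `L` with invertible factors `Π` and `P₂₂`.
-/

open Matrix

theorem commutator_commutator_eq_of_lyapunov {𝕜 R : Type*} [CommRing 𝕜] [Ring R] [Algebra 𝕜 R]
    {A P Q S T : R} {c : 𝕜}
    (hP : A * P - P * A = c • (P - S)) (hQ : A * Q - Q * A = T - c • Q) :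
    A * (Q * P - P * Q) - (Q * P - P * Q) * A = c • (S * Q - Q * S) + (T * P - P * T) := by
  have jacobi : A * (Q * P - P * Q) - (Q * P - P * Q) * A =
      (A * Q - Q * A) * P - P * (A * Q - Q * A)
        - ((A * P - P * A) * Q - Q * (A * P - P * A)) := by
    noncomm_ring
  rw [jacobi, hP, hQ]
  simp only [sub_mul, mul_sub, smul_mul_assoc, mul_smul_comm, smul_sub]
  abel

theorem toBlocks₁₂_commutator_fromBlocks {m n α : Type*} [Fintype m] [Fintype n] [Ring α]
    (A₁₁ : Matrix m m α) (A₁₂ : Matrix m n α) (A₂₁ : Matrix n m α) (A₂₂ : Matrix n n α)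
    (D : Matrix (m ⊕ n) (m ⊕ n) α) :
    (fromBlocks A₁₁ A₁₂ A₂₁ A₂₂ * D - D * fromBlocks A₁₁ A₁₂ A₂₁ A₂₂).toBlocks₁₂ =
      A₁₁ * D.toBlocks₁₂ + A₁₂ * D.toBlocks₂₂ - (D.toBlocks₁₁ * A₁₂ + D.toBlocks₁₂ * A₂₂) := by
  conv_lhs => rw [← fromBlocks_toBlocks D, fromBlocks_multiply, fromBlocks_multiply]
  rfl

theorem eq_smul_inv_mul_mul_inv_of_eq_smul_mul_mul {n 𝕜 : Type*} [Fintype n] [DecidableEq n]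
    [Field 𝕜] {A B X Y : Matrix n n 𝕜} {c : 𝕜} (hc : c ≠ 0) (hA : IsUnit A.det)
    (hB : IsUnit B.det) (h : Y = c • (A * X * B)) : X = c⁻¹ • (A⁻¹ * Y * B⁻¹) := by
  rw [h, Matrix.mul_smul, Matrix.smul_mul, smul_smul, inv_mul_cancel₀ hc, one_smul, mul_assoc A,
    nonsing_inv_mul_cancel_left _ _ hA, mul_nonsing_inv_cancel_right _ _ hB]

theorem eq_inv_mul_inv_mul_of_two_smul_sub_eq {n 𝕜 : Type*} [Fintype n] [DecidableEq n]
    [Field 𝕜] [NeZero (2 : 𝕜)] {Θ₁ Θ₂ K L M D₁₁ D₁₂ R : Matrix n n 𝕜}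
    (hΘ₂ : IsUnit Θ₂.det) (hD₁₂ : IsUnit D₁₂.det)
    (h : (2 : 𝕜) • (Θ₁ * K) * D₁₂
      - (D₁₁ * ((2 : 𝕜) • (Θ₁ * L)) + D₁₂ * ((2 : 𝕜) • (Θ₂ * M))) = R) :
    M = Θ₂⁻¹ * D₁₂⁻¹ * (Θ₁ * K * D₁₂ - D₁₁ * Θ₁ * L - (1 / 2 : 𝕜) • R) := by
  have hsolve : D₁₂ * (Θ₂ * M) = Θ₁ * K * D₁₂ - D₁₁ * Θ₁ * L - (1 / 2 : 𝕜) • R := by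
    rw [← h]
    simp only [Matrix.smul_mul, Matrix.mul_smul, smul_sub, smul_add, smul_smul, mul_assoc]
    rw [one_div, inv_mul_cancel₀ two_ne_zero]
    simp only [one_smul]
    abel
  rw [← hsolve, mul_assoc Θ₂⁻¹, nonsing_inv_mul_cancel_left _ _ hD₁₂,
    nonsing_inv_mul_cancel_left _ _ hΘ₂]

theorem theorem4_optimal_L_M_general {n q : ℕ}
    (Θ₁ Θ₂ K M L : Matrix (Fin n) (Fin n) ℝ)
    (hΘ₂inv : IsUnit Θ₂.det)
    (Θ calA : Matrix (Fin n ⊕ Fin n) (Fin n ⊕ Fin n) ℝ)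
    (hcalA : calA = fromBlocks
      ((2:ℝ) • (Θ₁ * K)) ((2:ℝ) • (Θ₁ * L)) ((2:ℝ) • (Θ₂ * Lᵀ)) ((2:ℝ) • (Θ₂ * M)))
    (P Q : Matrix (Fin n ⊕ Fin n) (Fin n ⊕ Fin n) ℝ)
    (Sig : Matrix (Fin n ⊕ Fin n) (Fin n ⊕ Fin n) ℝ)
    (CC : Matrix (Fin q) (Fin n ⊕ Fin n) ℝ) (τ : ℝ)
    (hPeq : calA * P - P * calA = (1 / τ) • (P - Sig * Θ⁻¹))
    (hQeq : calA * Q - Q * calA = Θ * CCᵀ * CC - (1 / τ) • Q)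
    (D : Matrix (Fin n ⊕ Fin n) (Fin n ⊕ Fin n) ℝ) (hD : D = Q * P - P * Q)
    (Pim : Matrix (Fin n) (Fin n) ℝ) (lam : ℝ) (hPim : Pim.PosDef) (hlam : 0 < lam)
    (hopt1 : D.toBlocks₁₂ = (lam / 2) • (Pim * L * P.toBlocks₂₂))
    (hopt2 : D.toBlocks₂₂ = 0)
    (hP22 : IsUnit (P.toBlocks₂₂).det) (hD12 : D.toBlocks₁₂.det ≠ 0) :
    L = (2 / lam) • (Pim⁻¹ * D.toBlocks₁₂ * (P.toBlocks₂₂)⁻¹)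
    ∧ M = Θ₂⁻¹ * (D.toBlocks₁₂)⁻¹ *
        (Θ₁ * K * D.toBlocks₁₂ - D.toBlocks₁₁ * Θ₁ * L
          - (1 / 2 : ℝ) • ((1 / τ) • ((Sig * Θ⁻¹) * Q - Q * (Sig * Θ⁻¹)).toBlocks₁₂
              + ((Θ * CCᵀ * CC) * P - P * (Θ * CCᵀ * CC)).toBlocks₁₂)) := by
  constructor
  · rw [← inv_div]
    exact eq_smul_inv_mul_mul_inv_of_eq_smul_mul_mul (by positivity)
      (isUnit_iff_ne_zero.mpr hPim.det_pos.ne') hP22 hopt1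
  · have hcomm := congrArg toBlocks₁₂ (commutator_commutator_eq_of_lyapunov hPeq hQeq)
    rw [← hD, hcalA, toBlocks₁₂_commutator_fromBlocks, hopt2, mul_zero, add_zero] at hcomm
    exact eq_inv_mul_inv_mul_of_two_smul_sub_eq hΘ₂inv (isUnit_iff_ne_zero.mpr hD12) hcomm

/-- (Theorem 4 of the paper.) For equally dimensioned plant and observer,
a nondegenerate stationary point of the CQF problem has coupling and energy matrices
`L = (2/λ)Π⁻¹D₁₂P₂₂⁻¹` and
`M = Θ₂⁻¹D₁₂⁻¹(Θ₁KD₁₂ − D₁₁Θ₁L − (1/2)((1/τ)[ΣΘ⁻¹,Q]₁₂ + [Θ𝒞ᵀ𝒞,P]₁₂))`. -/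
theorem theorem4_optimal_L_M {n q : ℕ}
    (Θ₁ Θ₂ K M L : Matrix (Fin n) (Fin n) ℝ)
    (hΘ₁ : Θ₁ᵀ = -Θ₁) (hΘ₁inv : IsUnit Θ₁.det)
    (hΘ₂ : Θ₂ᵀ = -Θ₂) (hΘ₂inv : IsUnit Θ₂.det)
    (hK : Kᵀ = K) (hM : Mᵀ = M)
    (Θ calA : Matrix (Fin n ⊕ Fin n) (Fin n ⊕ Fin n) ℝ)
    (hΘ : Θ = fromBlocks Θ₁ 0 0 Θ₂)
    (hcalA : calA = fromBlocks
      ((2:ℝ) • (Θ₁ * K)) ((2:ℝ) • (Θ₁ * L)) ((2:ℝ) • (Θ₂ * Lᵀ)) ((2:ℝ) • (Θ₂ * M)))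
    (P Q : Matrix (Fin n ⊕ Fin n) (Fin n ⊕ Fin n) ℝ)
    (Sig : Matrix (Fin n ⊕ Fin n) (Fin n ⊕ Fin n) ℝ) (hSig : Sigᵀ = Sig)
    (CC : Matrix (Fin q) (Fin n ⊕ Fin n) ℝ) (τ : ℝ) (hτ : 0 < τ)
    (hPeq : calA * P - P * calA = (1 / τ) • (P - Sig * Θ⁻¹))
    (hQeq : calA * Q - Q * calA = Θ * CCᵀ * CC - (1 / τ) • Q)
    (D : Matrix (Fin n ⊕ Fin n) (Fin n ⊕ Fin n) ℝ) (hD : D = Q * P - P * Q)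
    (Pim : Matrix (Fin n) (Fin n) ℝ) (lam : ℝ) (hPim : Pim.PosDef) (hlam : 0 < lam)
    (hopt1 : D.toBlocks₁₂ = (lam / 2) • (Pim * L * P.toBlocks₂₂))
    (hopt2 : D.toBlocks₂₂ = 0)
    (hP22 : IsUnit (P.toBlocks₂₂).det) (hD12 : D.toBlocks₁₂.det ≠ 0) :
    L = (2 / lam) • (Pim⁻¹ * D.toBlocks₁₂ * (P.toBlocks₂₂)⁻¹)
    ∧ M = Θ₂⁻¹ * (D.toBlocks₁₂)⁻¹ *
        (Θ₁ * K * D.toBlocks₁₂ - D.toBlocks₁₁ * Θ₁ * L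
          - (1 / 2 : ℝ) • ((1 / τ) • ((Sig * Θ⁻¹) * Q - Q * (Sig * Θ⁻¹)).toBlocks₁₂
              + ((Θ * CCᵀ * CC) * P - P * (Θ * CCᵀ * CC)).toBlocks₁₂)) :=
  theorem4_optimal_L_M_general Θ₁ Θ₂ K M L hΘ₂inv Θ calA hcalA P Q Sig CC τ hPeq hQeq D hD Pim lam
    hPim hlam hopt1 hopt2 hP22 hD12
end

section
/- Let 𝒜 ∈ ℝ^{N×N}, Â ∈ ℝ^{p×p} and S ∈ ℝ^{p×N} satisfy the intertwining relation S𝒜 = ÂS, let τ > 0, and suppose both 𝒜_τ := 𝒜 − (1/(2τ))I_N and Â_τ := Â − (1/(2τ))I_p are Hurwitz. Then the unique solution 𝒬 of the algebraic Lyapunov equation 𝒜_τᵀ𝒬 + 𝒬𝒜_τ + SᵀS = 0 is 𝒬 = Sᵀ𝒬̂S, where 𝒬̂ := 𝐋(Â_τᵀ, I_p) is the unique solution of Â_τᵀ𝒬̂ + 𝒬̂Â_τ + I_p = 0. Equivalently, 𝐋(𝒜_τᵀ, SᵀS) = Sᵀ𝐋(Â_τᵀ, I_p)S. -/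
/-!
For Hurwitz `α` the integrand `u(t) = e^{tα} β e^{tαᵀ}` of `𝐋(α, β)` decays exponentially: on the
generalized eigenspace of `α` for `μ`, `e^{tα}` acts as `e^{tμ}` times a polynomial in `t`, and
`Re μ < 0`. Since `u' = αu + uαᵀ`, integrating over `(0, ∞)` gives `α𝐋(α, β) + 𝐋(α, β)αᵀ = -β`.
So the Lyapunov operator `γ ↦ αγ + γαᵀ` is surjective, hence bijective in finite dimension, and
`𝐋(α, β)` is the unique solution of `αγ + γαᵀ + β = 0`. The reduction is then algebraic:
`S𝒜_τ = Â_τS` carries the equation solved by `𝒬̂` to the one for `𝒜_τ`, now solved by `Sᵀ𝒬̂S`,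
and uniqueness for `𝒜_τ` identifies `Sᵀ𝒬̂S` with `𝐋(𝒜_τᵀ, SᵀS)`.
-/

open Matrix MeasureTheory

attribute [local instance] Matrix.normedAddCommGroup Matrix.normedSpace

/-- A real square matrix is Hurwitz if all its complex eigenvalues have negative real part. -/
def Hurwitz {m : Type*} [Fintype m] [DecidableEq m] (M : Matrix m m ℝ) : Prop :=
  ∀ μ ∈ spectrum ℂ (M.map (Complex.ofReal · : ℝ → ℂ)), μ.re < 0

/-- `lyap α β := ∫₀^∞ e^{tα} β e^{tαᵀ} dt`, the solution of the algebraic Lyapunov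
equation `αγ + γαᵀ + β = 0` when `α` is Hurwitz. -/
noncomputable def lyap {m : Type*} [Fintype m] [DecidableEq m]
    (α β : Matrix m m ℝ) : Matrix m m ℝ :=
  ∫ t in Set.Ioi (0:ℝ), NormedSpace.exp (t • α) * β * NormedSpace.exp (t • αᵀ)

open NormedSpace Filter Topology Asymptotics Set
open scoped Nat

namespace Asymptotics

variable {ι R m n p : Type*} {l : Filter ι} [NormedRing R] [Fintype m] [Fintype n] [Fintype p]

theorem IsBigO.matrix_mul {f : ι → Matrix m n R} {g : ι → Matrix n p R} {a b : ι → ℝ}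
    (hf : f =O[l] a) (hg : g =O[l] b) : (fun x => f x * g x) =O[l] fun x => a x * b x := by
  refine isBigO_pi.2 fun i => isBigO_pi.2 fun k => ?_
  simp only [mul_apply]
  exact IsBigO.fun_sum fun j _ =>
    (isBigO_pi.1 (isBigO_pi.1 hf i) j).mul (isBigO_pi.1 (isBigO_pi.1 hg j) k)

theorem IsBigO.matrix_transpose {f : ι → Matrix m n R} {a : ι → ℝ} (hf : f =O[l] a) :
    (fun x => (f x)ᵀ) =O[l] a :=
  isBigO_norm_left.1 <| by simpa only [norm_transpose] using isBigO_norm_left.2 hf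

end Asymptotics

theorem HasDerivAt.matrix_mul {𝕜 m n p : Type*} [NontriviallyNormedField 𝕜] [Fintype m]
    [Fintype n] [Fintype p] {f : 𝕜 → Matrix m n 𝕜} {g : 𝕜 → Matrix n p 𝕜} {f' : Matrix m n 𝕜}
    {g' : Matrix n p 𝕜} {t : 𝕜} (hf : HasDerivAt f f' t) (hg : HasDerivAt g g' t) :
    HasDerivAt (fun s => f s * g s) (f' * g t + f t * g') t := by
  refine hasDerivAt_pi.2 fun i => hasDerivAt_pi.2 fun k => ?_
  simp only [Matrix.add_apply, mul_apply, ← Finset.sum_add_distrib]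
  exact HasDerivAt.fun_sum fun j _ =>
    (hasDerivAt_pi.1 (hasDerivAt_pi.1 hf i) j).mul (hasDerivAt_pi.1 (hasDerivAt_pi.1 hg j) k)

theorem Module.End.mem_spectrum_of_mem_maxGenEigenspace {R M : Type*} [CommRing R]
    [AddCommGroup M] [Module R M] {f : Module.End R M} {μ : R} {v : M}
    (hv : v ∈ f.maxGenEigenspace μ) (hv0 : v ≠ 0) : μ ∈ spectrum R f := by
  have hμ : f.HasUnifEigenvalue μ ⊤ := fun h => hv0 ((Submodule.mem_bot R).1 (h ▸ hv))
  exact ((hasUnifEigenvalue_iff_hasUnifEigenvalue_one (by simp)).1 hμ).mem_spectrum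

theorem isBigO_cexp_mul_pow {μ : ℂ} {ε : ℝ} (hε : ε < -μ.re) (j : ℕ) :
    (fun t : ℝ => Complex.exp (t * μ) * (t : ℂ) ^ j) =O[atTop] fun t => Real.exp (-ε * t) := by
  have hpow : (fun t : ℝ => t ^ j) =O[atTop] fun t => Real.exp ((-μ.re - ε) * t) :=
    (isLittleO_pow_exp_pos_mul_atTop j (by linarith)).isBigO
  refine (isBigO_of_le _ fun t => ?_).trans
    (((isBigO_refl (fun t => Real.exp (μ.re * t)) _).mul hpow).congr_right fun t => ?_)
  · simp [Complex.norm_exp, mul_comm]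
  · rw [← Real.exp_add]
    ring_nf

namespace Matrix

variable {m : Type*} [Fintype m] [DecidableEq m]

theorem spectrum_transpose {R : Type*} [CommRing R] (A : Matrix m m R) :
    spectrum R Aᵀ = spectrum R A := by
  ext r
  have h : algebraMap R _ r - Aᵀ = (algebraMap R _ r - A)ᵀ := by
    rw [transpose_sub, Algebra.algebraMap_eq_smul_one, transpose_smul, transpose_one]
  rw [spectrum.mem_iff, spectrum.mem_iff, h, isUnit_transpose]

theorem transpose_mul_conj_add_conj_mul {R n p : Type*} [CommRing R] [Fintype n] [Fintype p]
    {S : Matrix p n R} {A : Matrix n n R} {B : Matrix p p R} (h : S * A = B * S)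
    (Q : Matrix p p R) : Aᵀ * (Sᵀ * Q * S) + Sᵀ * Q * S * A = Sᵀ * (Bᵀ * Q + Q * B) * S := by
  have hT : Aᵀ * Sᵀ = Sᵀ * Bᵀ := by rw [← transpose_mul, h, transpose_mul]
  rw [Matrix.mul_add, Matrix.add_mul, ← Matrix.mul_assoc, ← Matrix.mul_assoc, hT,
    Matrix.mul_assoc (Sᵀ * Q), h]
  simp only [Matrix.mul_assoc]

/- The sup norm induces the product topology on matrices only up to unfolding, which instance
search does not see. -/
instance continuousENorm : ContinuousENorm (Matrix m m ℝ) := SeminormedAddGroup.toContinuousENorm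

/- The analytic facts about `exp` need a normed algebra; the sup norm is not submultiplicative,
so they are taken from the `L∞` operator norm, which induces the same topology. -/
theorem hasDerivAt_exp_smul (A : Matrix m m ℝ) (t : ℝ) :
    HasDerivAt (fun s : ℝ => exp (s • A)) (A * exp (t • A)) t :=
  hasDerivAt_iff_tendsto_slope.2 <| hasDerivAt_iff_tendsto_slope.1 <|
    @hasDerivAt_exp_smul_const' ℝ _ _ Matrix.linftyOpNormedRing Matrix.linftyOpNormedAlgebra
      (FiniteDimensional.complete ℝ _) A t

theorem exp_map_ofReal (M : Matrix m m ℝ) :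
    exp (M.map Complex.ofReal) = (exp M).map Complex.ofReal :=
  (@map_exp _ _ Matrix.linftyOpNormedRing Matrix.linftyOpNormedAlgebra
    (FiniteDimensional.complete ℝ _) Matrix.linftyOpNormedRing _ _ _ _ Complex.ofRealHom.mapMatrix
    (continuous_id.matrix_map Complex.continuous_ofReal) M).symm

theorem exp_mulVec_of_pow_mulVec_eq_zero {A : Matrix m m ℂ} {v : m → ℂ} {k : ℕ}
    (hv : A ^ k *ᵥ v = 0) : exp A *ᵥ v = ∑ j ∈ Finset.range k, (j ! : ℂ)⁻¹ • (A ^ j *ᵥ v) := by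
  have hexp : HasSum (fun j => (j ! : ℂ)⁻¹ • (A ^ j *ᵥ v)) (exp A *ᵥ v) := by
    have := (@exp_series_hasSum_exp' ℂ _ _ _ _ Matrix.linftyOpNormedRing
      Matrix.linftyOpNormedAlgebra (FiniteDimensional.complete ℂ _) A).map
      (mulVec.addMonoidHomLeft v) (continuous_id.matrix_mulVec continuous_const)
    convert this using 1
    · ext1 j
      exact (smul_mulVec _ _ _).symm
    · rfl
  refine hexp.unique (hasSum_sum_of_ne_finset_zero fun j hj => ?_)
  obtain ⟨i, rfl⟩ := Nat.exists_eq_add_of_le' (not_lt.1 (Finset.mem_range.not.1 hj))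
  rw [pow_add, ← mulVec_mulVec, hv, mulVec_zero, smul_zero]

theorem exp_smul_mulVec_of_pow_sub_mulVec_eq_zero {A : Matrix m m ℂ} {μ : ℂ} {v : m → ℂ}
    {k : ℕ} (hv : (A - μ • 1) ^ k *ᵥ v = 0) (t : ℂ) :
    exp (t • A) *ᵥ v = ∑ j ∈ Finset.range k,
      (Complex.exp (t * μ) * t ^ j) • ((j ! : ℂ)⁻¹ • ((A - μ • 1) ^ j *ᵥ v)) := by
  set N := A - μ • 1
  have hsplit : t • A = algebraMap ℂ _ (t * μ) + t • N := by
    rw [Algebra.algebraMap_eq_smul_one, smul_sub, mul_smul, add_sub_cancel]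
  have hN : (t • N) ^ k *ᵥ v = 0 := by rw [smul_pow, smul_mulVec, hv, smul_zero]
  have hscalar : exp (algebraMap ℂ (Matrix m m ℂ) (t * μ)) =
      algebraMap ℂ _ (Complex.exp (t * μ)) := by
    rw [Complex.exp_eq_exp_ℂ]
    exact (@algebraMap_exp_comm ℂ _ _ _ _ Matrix.linftyOpNormedRing
      Matrix.linftyOpNormedAlgebra _ _).symm
  rw [hsplit, exp_add_of_commute _ _ (Algebra.commute_algebraMap_left _ _), hscalar,
    Algebra.algebraMap_eq_smul_one, smul_mul, one_mul, smul_mulVec,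
    exp_mulVec_of_pow_mulVec_eq_zero hN, Finset.smul_sum]
  refine Finset.sum_congr rfl fun j _ => ?_
  rw [smul_pow, smul_mulVec]
  module

theorem isBigO_exp_smul_mulVec_of_mem_maxGenEigenspace {A : Matrix m m ℂ} {μ : ℂ}
    {v : m → ℂ} (hv : v ∈ Module.End.maxGenEigenspace (toLin' A) μ) {ε : ℝ} (hε : ε < -μ.re) :
    (fun t : ℝ => exp ((t : ℂ) • A) *ᵥ v) =O[atTop] fun t => Real.exp (-ε * t) := by
  obtain ⟨k, hk⟩ := (Module.End.mem_maxGenEigenspace _ _ _).1 hv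
  have hsub : toLin' A - μ • 1 = toLin' (A - μ • 1) := by
    rw [map_sub, map_smul, toLin'_one, Module.End.one_eq_id]
  rw [hsub, ← toLin'_pow, toLin'_apply] at hk
  simp_rw [exp_smul_mulVec_of_pow_sub_mulVec_eq_zero hk]
  refine IsBigO.fun_sum fun j _ => ?_
  simpa only [smul_eq_mul, mul_one] using (isBigO_cexp_mul_pow hε j).smul
    (isBigO_const_const (c' := (1 : ℝ)) ((j ! : ℂ)⁻¹ • ((A - μ • 1) ^ j *ᵥ v)) one_ne_zero atTop)

theorem isBigO_exp_smul_mulVec {A : Matrix m m ℂ} {ε : ℝ}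
    (hε : ∀ μ ∈ spectrum ℂ A, ε < -μ.re) (v : m → ℂ) :
    (fun t : ℝ => exp ((t : ℂ) • A) *ᵥ v) =O[atTop] fun t => Real.exp (-ε * t) := by
  have hv : v ∈ ⨆ μ, Module.End.maxGenEigenspace (toLin' A) μ := by
    rw [Module.End.iSup_maxGenEigenspace_eq_top]
    trivial
  refine Submodule.iSup_induction _ (motive := fun w => (fun t : ℝ => exp ((t : ℂ) • A) *ᵥ w)
    =O[atTop] fun t => Real.exp (-ε * t)) hv (fun μ w hw => ?_) ?_ fun w₁ w₂ h₁ h₂ => ?_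
  · rcases eq_or_ne w 0 with rfl | hw0
    · simp only [mulVec_zero]
      exact isBigO_zero _ _
    · refine isBigO_exp_smul_mulVec_of_mem_maxGenEigenspace hw (hε μ ?_)
      rw [← spectrum_toLin']
      exact Module.End.mem_spectrum_of_mem_maxGenEigenspace hw hw0
  · simp only [mulVec_zero]
    exact isBigO_zero _ _
  · simpa only [mulVec_add] using h₁.add h₂

end Matrix

variable {m : Type*} [Fintype m] [DecidableEq m]

theorem Hurwitz.transpose {M : Matrix m m ℝ} (h : Hurwitz M) : Hurwitz Mᵀ := by
  simpa only [Hurwitz, transpose_map, spectrum_transpose] using h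

theorem Hurwitz.exists_pos_lt_neg_re {M : Matrix m m ℝ} (h : Hurwitz M) :
    ∃ ε > 0, ∀ μ ∈ spectrum ℂ (M.map Complex.ofReal), ε < -μ.re := by
  rcases (spectrum ℂ (M.map Complex.ofReal)).eq_empty_or_nonempty with hs | hs
  · exact ⟨1, one_pos, by simp [hs]⟩
  obtain ⟨μ₀, hμ₀, hmax⟩ := Set.exists_max_image _ Complex.re (finite_spectrum _) hs
  have := h μ₀ hμ₀
  exact ⟨-μ₀.re / 2, by linarith, fun μ hμ => by linarith [hmax μ hμ]⟩

theorem Hurwitz.exists_isBigO_exp_smul {M : Matrix m m ℝ} (h : Hurwitz M) :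
    ∃ ε > 0, (fun t : ℝ => exp (t • M)) =O[atTop] fun t => Real.exp (-ε * t) := by
  obtain ⟨ε, hε, hgap⟩ := h.exists_pos_lt_neg_re
  refine ⟨ε, hε, isBigO_pi.2 fun i => isBigO_pi.2 fun j => ?_⟩
  have hcol := isBigO_pi.1 (isBigO_exp_smul_mulVec hgap (Pi.single j 1)) i
  refine isBigO_norm_left.1 ((isBigO_norm_left.2 hcol).congr_left fun t => ?_)
  have hmap : (t : ℂ) • M.map Complex.ofReal = (t • M).map Complex.ofReal := by
    ext; simp
  rw [mulVec_single_one, col_apply, hmap, exp_map_ofReal, map_apply, Complex.norm_real]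

noncomputable def lyapIntegrand (α β : Matrix m m ℝ) (t : ℝ) : Matrix m m ℝ :=
  exp (t • α) * β * exp (t • αᵀ)

noncomputable def lyapOp (α : Matrix m m ℝ) : Matrix m m ℝ →L[ℝ] Matrix m m ℝ :=
  LinearMap.toContinuousLinearMap (LinearMap.mulLeft ℝ α + LinearMap.mulRight ℝ αᵀ)

@[simp]
theorem lyapOp_apply (α γ : Matrix m m ℝ) : lyapOp α γ = α * γ + γ * αᵀ := rfl

theorem hasDerivAt_lyapIntegrand (α β : Matrix m m ℝ) (t : ℝ) :
    HasDerivAt (lyapIntegrand α β) (lyapOp α (lyapIntegrand α β t)) t := by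
  have hcomm : αᵀ * exp (t • αᵀ) = exp (t • αᵀ) * αᵀ :=
    ((Commute.refl αᵀ).smul_right t).exp_right.eq
  refine (((hasDerivAt_exp_smul α t).matrix_mul (hasDerivAt_const t β)).matrix_mul
    (hasDerivAt_exp_smul αᵀ t)).congr_deriv ?_
  simp only [lyapIntegrand, lyapOp_apply, Matrix.mul_zero, add_zero, hcomm, Matrix.mul_assoc]

variable {α : Matrix m m ℝ}

theorem Hurwitz.exists_isBigO_lyapIntegrand (hα : Hurwitz α) (β : Matrix m m ℝ) :
    ∃ b > 0, lyapIntegrand α β =O[atTop] fun t => Real.exp (-b * t) := by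
  obtain ⟨ε, hε, hexp⟩ := hα.exists_isBigO_exp_smul
  have hexpT : (fun t : ℝ => exp (t • αᵀ)) =O[atTop] fun t => Real.exp (-ε * t) := by
    simpa only [← transpose_smul, exp_transpose] using hexp.matrix_transpose
  refine ⟨2 * ε, by positivity, ?_⟩
  refine ((hexp.matrix_mul (isBigO_const_const β (one_ne_zero (α := ℝ)) atTop)).matrix_mul
    hexpT).congr_right fun t => ?_
  rw [mul_one, ← Real.exp_add]
  ring_nf

theorem Hurwitz.integrableOn_lyapIntegrand (hα : Hurwitz α) (β : Matrix m m ℝ) :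
    IntegrableOn (lyapIntegrand α β) (Ioi 0) := by
  obtain ⟨b, hb, hO⟩ := hα.exists_isBigO_lyapIntegrand β
  have hcont : Continuous (lyapIntegrand α β) :=
    continuous_iff_continuousAt.2 fun t => (hasDerivAt_lyapIntegrand α β t).continuousAt
  exact (hcont.locallyIntegrable.locallyIntegrableOn _ |>.integrableOn_of_isBigO_atTop hO
    ⟨Ioi 0, Ioi_mem_atTop 0, exp_neg_integrableOn_Ioi 0 hb⟩).mono_set Ioi_subset_Ici_self

theorem Hurwitz.tendsto_lyapIntegrand (hα : Hurwitz α) (β : Matrix m m ℝ) :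
    Tendsto (lyapIntegrand α β) atTop (𝓝 0) := by
  obtain ⟨b, hb, hO⟩ := hα.exists_isBigO_lyapIntegrand β
  exact hO.trans_tendsto <| Real.tendsto_exp_atBot.comp <|
    tendsto_id.const_mul_atTop_of_neg (neg_neg_iff_pos.2 hb)

theorem Hurwitz.lyapOp_lyap (hα : Hurwitz α) (β : Matrix m m ℝ) : lyapOp α (lyap α β) = -β := by
  have hint := hα.integrableOn_lyapIntegrand β
  calc lyapOp α (lyap α β) = ∫ t in Ioi 0, lyapOp α (lyapIntegrand α β t) :=
        ((lyapOp α).integral_comp_comm hint).symm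
    _ = 0 - lyapIntegrand α β 0 :=
        integral_Ioi_of_hasDerivAt_of_tendsto' (fun t _ => hasDerivAt_lyapIntegrand α β t)
          ((lyapOp α).integrable_comp hint) (hα.tendsto_lyapIntegrand β)
    _ = -β := by simp [lyapIntegrand]

theorem Hurwitz.eq_lyap (hα : Hurwitz α) {β Q : Matrix m m ℝ} (hQ : α * Q + Q * αᵀ + β = 0) :
    Q = lyap α β := by
  have hsurj : Function.Surjective (lyapOp α : Matrix m m ℝ →ₗ[ℝ] Matrix m m ℝ) :=
    fun γ => ⟨lyap α (-γ), by simp [hα.lyapOp_lyap]⟩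
  refine LinearMap.injective_iff_surjective.2 hsurj ?_
  simp only [ContinuousLinearMap.coe_coe, hα.lyapOp_lyap, lyapOp_apply]
  exact eq_neg_of_add_eq_zero_left hQ

theorem observability_Gramian_reduction_general {N p : ℕ}
    (calA : Matrix (Fin N) (Fin N) ℝ) (Ahat : Matrix (Fin p) (Fin p) ℝ)
    (S : Matrix (Fin p) (Fin N) ℝ) (hint : S * calA = Ahat * S)
    (τ : ℝ)
    (calAτ : Matrix (Fin N) (Fin N) ℝ) (hcalAτ : calAτ = calA - (1 / (2 * τ)) • 1)
    (Ahatτ : Matrix (Fin p) (Fin p) ℝ) (hAhatτ : Ahatτ = Ahat - (1 / (2 * τ)) • 1)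
    (h1 : Hurwitz calAτ) (h2 : Hurwitz Ahatτ) :
    (Ahatτᵀ * lyap Ahatτᵀ 1 + lyap Ahatτᵀ 1 * Ahatτ + 1 = 0)
    ∧ (calAτᵀ * (Sᵀ * lyap Ahatτᵀ 1 * S) + (Sᵀ * lyap Ahatτᵀ 1 * S) * calAτ + Sᵀ * S = 0)
    ∧ (∀ calQ : Matrix (Fin N) (Fin N) ℝ,
        calAτᵀ * calQ + calQ * calAτ + Sᵀ * S = 0 → calQ = Sᵀ * lyap Ahatτᵀ 1 * S)
    ∧ lyap calAτᵀ (Sᵀ * S) = Sᵀ * lyap Ahatτᵀ 1 * S := by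
  have hcomm : S * calAτ = Ahatτ * S := by
    rw [hcalAτ, hAhatτ, Matrix.mul_sub, Matrix.sub_mul, hint, Matrix.mul_smul, Matrix.smul_mul,
      Matrix.mul_one, Matrix.one_mul]
  have hQhat : Ahatτᵀ * lyap Ahatτᵀ 1 + lyap Ahatτᵀ 1 * Ahatτ + 1 = 0 := by
    simpa [eq_neg_iff_add_eq_zero] using h2.transpose.lyapOp_lyap 1
  have hQ : calAτᵀ * (Sᵀ * lyap Ahatτᵀ 1 * S) + (Sᵀ * lyap Ahatτᵀ 1 * S) * calAτ + Sᵀ * S = 0 := by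
    rw [transpose_mul_conj_add_conj_mul hcomm]
    simpa [Matrix.mul_add, Matrix.add_mul] using congrArg (fun X => Sᵀ * X * S) hQhat
  have hunique : ∀ Q, calAτᵀ * Q + Q * calAτ + Sᵀ * S = 0 → Q = lyap calAτᵀ (Sᵀ * S) :=
    fun Q hQ' => h1.transpose.eq_lyap (by rwa [transpose_transpose])
  exact ⟨hQhat, hQ, fun Q hQ' => (hunique Q hQ').trans (hunique _ hQ).symm, (hunique _ hQ).symm⟩

/-- (Lower-rank reduction of the observability Gramian.) If `S𝒜 = ÂS`
and both `𝒜_τ := 𝒜 − (1/(2τ))I` and `Â_τ := Â − (1/(2τ))I` are Hurwitz, then with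
`𝒬̂ := 𝐋(Â_τᵀ, I)` (the unique solution of `Â_τᵀ𝒬̂ + 𝒬̂Â_τ + I = 0`), the matrix
`Sᵀ𝒬̂S` is the unique solution of `𝒜_τᵀ𝒬 + 𝒬𝒜_τ + SᵀS = 0`; equivalently,
`𝐋(𝒜_τᵀ, SᵀS) = Sᵀ𝐋(Â_τᵀ, I)S`. -/
theorem observability_Gramian_reduction {N p : ℕ}
    (calA : Matrix (Fin N) (Fin N) ℝ) (Ahat : Matrix (Fin p) (Fin p) ℝ)
    (S : Matrix (Fin p) (Fin N) ℝ) (hint : S * calA = Ahat * S)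
    (τ : ℝ) (hτ : 0 < τ)
    (calAτ : Matrix (Fin N) (Fin N) ℝ) (hcalAτ : calAτ = calA - (1 / (2 * τ)) • 1)
    (Ahatτ : Matrix (Fin p) (Fin p) ℝ) (hAhatτ : Ahatτ = Ahat - (1 / (2 * τ)) • 1)
    (h1 : Hurwitz calAτ) (h2 : Hurwitz Ahatτ) :
    (Ahatτᵀ * lyap Ahatτᵀ 1 + lyap Ahatτᵀ 1 * Ahatτ + 1 = 0)
    ∧ (calAτᵀ * (Sᵀ * lyap Ahatτᵀ 1 * S) + (Sᵀ * lyap Ahatτᵀ 1 * S) * calAτ + Sᵀ * S = 0)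
    ∧ (∀ calQ : Matrix (Fin N) (Fin N) ℝ,
        calAτᵀ * calQ + calQ * calAτ + Sᵀ * S = 0 → calQ = Sᵀ * lyap Ahatτᵀ 1 * S)
    ∧ lyap calAτᵀ (Sᵀ * S) = Sᵀ * lyap Ahatτᵀ 1 * S :=
  observability_Gramian_reduction_general calA Ahat S hint τ calAτ hcalAτ Ahatτ hAhatτ h1 h2
end
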